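/- Let u be a negative plurisubharmonic function on the open unit ball 𝔹^{2n} of ℂⁿ. For 0 < a, ε < 1 and ‖z‖ < 1-ε define u_{a,ε}(z) = (sup{u((1+r)φ(z)) : φ ∈ U(n), ‖φ - Id‖ < a, 0 ≤ r ≤ ε})^*, the upper semicontinuous regularization of the indicated supremum. Then u_{a,ε} is plurisubharmonic on the ball of radius 1-ε and, for every z ∈ 𝔹^{2n}, lim_{a→0⁺} lim_{ε→0⁺} u_{a,ε}(z) = u(z). -/

import Mathlib

open MeasureTheory Filter Metric Topology ENNReal

noncomputable section

/-- `ℂⁿ` with its Euclidean structure. -/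
abbrev Cn (n : ℕ) : Type := EuclideanSpace ℂ (Fin n)

instance (n : ℕ) : MeasurableSpace (Cn n) :=
  MeasurableSpace.comap (WithLp.ofLp (p := 2)) (MeasurableSpace.pi : MeasurableSpace (Fin n → ℂ))

instance (n : ℕ) : BorelSpace (Cn n) := PiLp.borelSpace 2

instance (n : ℕ) : MeasureSpace (Cn n) :=
  { volume := Measure.map (WithLp.toLp 2) (MeasureTheory.MeasureSpace.pi.volume : Measure (Fin n → ℂ)) }

variable {n : ℕ}

/-- The "positive part" of an extended real number, as an element of `ℝ≥0∞`. -/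
def EReal.posPart (x : EReal) : ℝ≥0∞ := if x = ⊤ then ⊤ else ENNReal.ofReal x.toReal

/-- The (possibly infinite) integral of an `EReal`-valued function, defined as the
difference of the lower integrals of its positive and negative parts. -/
def erealIntegral {α : Type*} [MeasurableSpace α] (μ : Measure α) (f : α → EReal) : EReal :=
  ((∫⁻ a, (f a).posPart ∂μ : ℝ≥0∞) : EReal) - ((∫⁻ a, (-(f a)).posPart ∂μ : ℝ≥0∞) : EReal)

/-- A function `u : ℂⁿ → [-∞, ∞)` is plurisubharmonic on an (open) set `Ω` if it is upper
semicontinuous on `Ω`, takes values in `[-∞, ∞)` on `Ω`, and satisfies the sub-mean value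
inequality on every circle (inside `Ω`) contained in a complex line. -/
def PlurisubharmonicOn (Ω : Set (Cn n)) (u : Cn n → EReal) : Prop :=
  UpperSemicontinuousOn u Ω ∧ (∀ z ∈ Ω, u z ≠ ⊤) ∧
  ∀ z ∈ Ω, ∀ w : Cn n, ∀ r : ℝ, 0 < r →
    (∀ c : ℂ, ‖c‖ ≤ r → z + c • w ∈ Ω) →
    ((2 * Real.pi : ℝ) : EReal) * u z ≤
      erealIntegral (volume.restrict (Set.Ioc (0 : ℝ) (2 * Real.pi)))
        (fun θ => u (z + ((r : ℂ) * Complex.exp (θ * Complex.I)) • w))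

/-- The second derivative of `f` at `z` evaluated on the pair of vectors `(v, w)`. -/
def hess2 (f : Cn n → ℝ) (z v w : Cn n) : ℝ := iteratedFDeriv ℝ 2 f z ![v, w]

/-- The (diagonal of the) Levi form `L_f(z; v) = ∑ ∂²f/∂z_j∂z̄_k v_j v̄_k` of a real-valued
`C²` function, expressed via real second derivatives. -/
def leviForm (f : Cn n → ℝ) (z v : Cn n) : ℝ :=
  (hess2 f z v v + hess2 f z ((Complex.I : ℂ) • v) ((Complex.I : ℂ) • v)) / 4

/-- The complex derivative `∂f(z)(v) = ∑_j ∂f/∂z_j(z) v_j` of a real-valued function. -/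
def wirtingerDeriv (f : Cn n → ℝ) (z v : Cn n) : ℂ :=
  (((fderiv ℝ f z v : ℝ) : ℂ) - Complex.I * ((fderiv ℝ f z ((Complex.I : ℂ) • v) : ℝ) : ℂ)) / 2

/-- The complex Hessian matrix `(∂²f/∂z_j∂z̄_k(z))_{j,k}` of a real-valued function,
expressed via real second derivatives. -/
def complexHessian (f : Cn n → ℝ) (z : Cn n) : Matrix (Fin n) (Fin n) ℂ :=
  Matrix.of fun j k =>
    (((hess2 f z (EuclideanSpace.single j 1) (EuclideanSpace.single k 1)
        + hess2 f z ((Complex.I : ℂ) • EuclideanSpace.single j 1)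
            ((Complex.I : ℂ) • EuclideanSpace.single k 1)) / 4 : ℝ) : ℂ)
    + Complex.I * (((hess2 f z (EuclideanSpace.single j 1)
            ((Complex.I : ℂ) • EuclideanSpace.single k 1)
        - hess2 f z ((Complex.I : ℂ) • EuclideanSpace.single j 1)
            (EuclideanSpace.single k 1)) / 4 : ℝ) : ℂ)

/-- The density of the Monge–Ampère measure `(dd^c f)^n` of a `C²` function `f` with respect
to Lebesgue measure: `(dd^c f)^n = 4^n n! det(∂²f/∂z_j∂z̄_k) dV`. -/
def maDensity (f : Cn n → ℝ) (z : Cn n) : ℝ :=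
  (4 : ℝ) ^ n * (Nat.factorial n) * ((complexHessian f z).det).re

/-- `v` is a decreasing sequence of `C²` plurisubharmonic functions on `Ω`
converging pointwise to `u`. -/
def IsSmoothPshApprox (Ω : Set (Cn n)) (u : Cn n → EReal) (v : ℕ → Cn n → ℝ) : Prop :=
  (∀ j, ContDiffOn ℝ 2 (v j) Ω) ∧
  (∀ j, PlurisubharmonicOn Ω fun z => ((v j z : ℝ) : EReal)) ∧
  (∀ z ∈ Ω, Antitone fun j => v j z) ∧
  (∀ z ∈ Ω, Tendsto (fun j => ((v j z : ℝ) : EReal)) atTop (nhds (u z)))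

/-- `μ` is the (Bedford–Taylor–Cegrell) Monge–Ampère measure `(dd^c u)^n` of `u` on `Ω`:
there is at least one decreasing `C²` plurisubharmonic approximation of `u` on `Ω`, and along
every such approximation the smooth Monge–Ampère measures converge weakly to `μ`. -/
def IsMongeAmpereOf (Ω : Set (Cn n)) (u : Cn n → EReal) (μ : Measure (Cn n)) : Prop :=
  (∃ v, IsSmoothPshApprox Ω u v) ∧
  ∀ v, IsSmoothPshApprox Ω u v →
    ∀ f : Cn n → ℝ, Continuous f → HasCompactSupport f → tsupport f ⊆ Ω →
      Tendsto (fun j => ∫ z in Ω, f z * maDensity (v j) z) atTop (nhds (∫ z, f z ∂μ))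

/-- The Monge–Ampère measure `(dd^c u)^n` of `u` on `Ω` (junk value if it does not exist). -/
def mongeAmpere (Ω : Set (Cn n)) (u : Cn n → EReal) : Measure (Cn n) :=
  letI := Classical.propDecidable (∃ μ, IsMongeAmpereOf Ω u μ)
  if h : ∃ μ, IsMongeAmpereOf Ω u μ then h.choose else 0

/-- The Cegrell class `𝓔₀(Ω)`: bounded plurisubharmonic functions on `Ω` with boundary
limit `0` and finite total Monge–Ampère mass. -/
def InE0 (Ω : Set (Cn n)) (u : Cn n → EReal) : Prop :=
  PlurisubharmonicOn Ω u ∧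
  (∃ C : ℝ, ∀ z ∈ Ω, ((-C : ℝ) : EReal) ≤ u z ∧ u z ≤ ((C : ℝ) : EReal)) ∧
  (∀ ξ ∈ frontier Ω, Tendsto u (nhdsWithin ξ Ω) (nhds (0 : EReal))) ∧
  mongeAmpere Ω u Ω < ⊤

/-- The Cegrell class `𝓕(Ω)`: plurisubharmonic `u` admitting a decreasing sequence in
`𝓔₀(Ω)` converging pointwise to `u` with uniformly bounded Monge–Ampère masses. -/
def InCegrellF (Ω : Set (Cn n)) (u : Cn n → EReal) : Prop :=
  PlurisubharmonicOn Ω u ∧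
  ∃ v : ℕ → Cn n → EReal,
    (∀ j, InE0 Ω (v j)) ∧
    (∀ z ∈ Ω, Antitone fun j => v j z) ∧
    (∀ z ∈ Ω, Tendsto (fun j => v j z) atTop (nhds (u z))) ∧
    (⨆ j, mongeAmpere Ω (v j) Ω) < ⊤

/-- A bounded strictly pseudoconvex domain: a bounded domain `Ω = {ρ < 0}` for some `C²`
defining function `ρ` on a neighborhood of `closure Ω` with nonvanishing gradient on `∂Ω`
and `dd^c ρ ≥ c · dd^c |z|²` for some `c > 0`. -/
def IsStrictlyPseudoconvexDomain (Ω : Set (Cn n)) : Prop :=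
  IsOpen Ω ∧ IsConnected Ω ∧ Bornology.IsBounded Ω ∧
  ∃ (U : Set (Cn n)) (ρ : Cn n → ℝ) (c : ℝ),
    IsOpen U ∧ closure Ω ⊆ U ∧ ContDiffOn ℝ 2 ρ U ∧
    Ω = {z ∈ U | ρ z < 0} ∧
    (∀ z ∈ frontier Ω, fderiv ℝ ρ z ≠ 0) ∧
    0 < c ∧ (∀ z ∈ U, ∀ v : Cn n, c * ‖v‖ ^ 2 ≤ leviForm ρ z v)

/-- A bounded hyperconvex domain: a bounded domain carrying a negative plurisubharmonic
exhaustion function. -/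
def IsHyperconvexDomain (Ω : Set (Cn n)) : Prop :=
  IsOpen Ω ∧ IsConnected Ω ∧ Bornology.IsBounded Ω ∧
  ∃ φ : Cn n → EReal, PlurisubharmonicOn Ω φ ∧ (∀ z ∈ Ω, φ z < 0) ∧
    ∀ c : ℝ, c < 0 →
      IsCompact (closure {z ∈ Ω | φ z < (c : EReal)}) ∧
        closure {z ∈ Ω | φ z < (c : EReal)} ⊆ Ω

/-- A maximal plurisubharmonic function on `Ω`. -/
def IsMaximalPSH (Ω : Set (Cn n)) (u : Cn n → EReal) : Prop :=
  PlurisubharmonicOn Ω u ∧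
  ∀ v, PlurisubharmonicOn Ω v → ∀ K : Set (Cn n), IsCompact K → K ⊆ Ω →
    (∀ z ∈ Ω \ K, v z ≤ u z) → ∀ z ∈ Ω, v z ≤ u z

/-- The Cegrell class `𝓝(Ω)`: plurisubharmonic functions in the domain of definition of the
Monge–Ampère operator whose smallest maximal plurisubharmonic majorant is identically zero. -/
def InClassN (Ω : Set (Cn n)) (u : Cn n → EReal) : Prop :=
  PlurisubharmonicOn Ω u ∧ (∃ μ, IsMongeAmpereOf Ω u μ) ∧ (∀ z ∈ Ω, u z ≤ 0) ∧
  ∀ w, IsMaximalPSH Ω w → (∀ z ∈ Ω, u z ≤ w z) → ∀ z ∈ Ω, (0 : EReal) ≤ w z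

/-- The upper semicontinuous regularization `v*` of a function `v`. -/
def uscRegularization (f : Cn n → EReal) (z : Cn n) : EReal := Filter.limsup f (nhds z)

/-- The supremum `sup {u((1+r)φ(z)) : φ ∈ U(n), ‖φ - Id‖ < a, 0 ≤ r ≤ ε}`. -/
def dilatedSup {n : ℕ} (u : Cn n → EReal) (a ε : ℝ) (z : Cn n) : EReal :=
  sSup {y : EReal | ∃ φ : Cn n ≃ₗᵢ[ℂ] Cn n,
    ‖φ.toLinearIsometry.toContinuousLinearMap - ContinuousLinearMap.id ℂ (Cn n)‖ < a ∧
    ∃ r : ℝ, 0 ≤ r ∧ r ≤ ε ∧ y = u ((1 + r : ℝ) • φ z)}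

/-- The regularization `u_{a,ε} = (sup {u((1+r)φ(·)) : φ ∈ U(n), ‖φ - Id‖ < a, 0 ≤ r ≤ ε})^*`. -/
def dilatedSupStar {n : ℕ} (u : Cn n → EReal) (a ε : ℝ) : Cn n → EReal :=
  uscRegularization (dilatedSup u a ε)

/-! For `u ≤ 0` the sub-mean value inequality of `u` on a circle is equivalent to the super-mean
value inequality of the `ℝ≥0∞`-valued function `(-u)⁺`, where no subtraction of integrals occurs.
That inequality survives precomposition with `ℂ`-linear maps such as `(1 + r) φ`, pointwise
infima (hence the supremum defining `u_{a,ε}` before regularization), and, by Fatou's lemma, lower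
regularization, which is what the upper regularization of `u` becomes under `(-·)⁺`.

For the limit, `u_{a,ε}(z)` is monotone in `a` and `ε` and bounded below by `u z`, while upper
semicontinuity of `u` at `z` gives `u_{b,b}(z) ≤ t` for every `t > u z` and small `b`, because
`(1 + r) φ x` stays close to `z` for `x` near `z`. -/

namespace EReal

def negPart (x : EReal) : ℝ≥0∞ := (-x).toENNReal

lemma antitone_negPart : Antitone negPart :=
  fun _ _ h => toENNReal_le_toENNReal (EReal.neg_le_neg_iff.2 h)

lemma continuous_negPart : Continuous negPart :=
  continuous_toENNReal.comp continuous_neg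

@[simp] lemma negPart_bot : (⊥ : EReal).negPart = ⊤ := by simp [negPart]

lemma coe_negPart_of_nonpos {x : EReal} (hx : x ≤ 0) : (x.negPart : EReal) = -x :=
  coe_toENNReal (EReal.neg_nonneg.2 hx)

lemma mul_le_neg_coe_iff {c : ℝ} (hc : 0 ≤ c) {x : EReal} (hx : x ≤ 0) {I : ℝ≥0∞} :
    (c : EReal) * x ≤ -(I : EReal) ↔ I ≤ ENNReal.ofReal c * x.negPart := by
  obtain ⟨y, rfl⟩ : ∃ y : ℝ≥0∞, x = -(y : EReal) :=
    ⟨x.negPart, by rw [coe_negPart_of_nonpos hx, neg_neg]⟩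
  have hc' : (c : EReal) = ((ENNReal.ofReal c : ℝ≥0∞) : EReal) := by simp [hc]
  rw [negPart, neg_neg, toENNReal_coe, mul_comm, EReal.neg_mul, mul_comm, hc',
    ← EReal.coe_ennreal_mul, EReal.neg_le_neg_iff, EReal.coe_ennreal_le_coe_ennreal_iff]

end EReal

lemma erealIntegral_of_nonpos {α : Type*} [MeasurableSpace α] {μ : Measure α} {f : α → EReal}
    (hf : ∀ᵐ a ∂μ, f a ≤ 0) :
    erealIntegral μ f = -((∫⁻ a, (f a).negPart ∂μ : ℝ≥0∞) : EReal) := by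
  have hpos : ∫⁻ a, (f a).toENNReal ∂μ = 0 :=
    (lintegral_congr_ae (hf.mono fun _ ha => EReal.toENNReal_of_nonpos ha)).trans lintegral_zero
  rw [erealIntegral]
  change ((∫⁻ a, (f a).toENNReal ∂μ : ℝ≥0∞) : EReal) - _ = _
  rw [hpos, EReal.coe_ennreal_zero, zero_sub]
  rfl

lemma lowerSemicontinuous_liminf_nhds {α γ : Type*} [TopologicalSpace α] [CompleteLinearOrder γ]
    [TopologicalSpace γ] [OrderTopology γ] [DenselyOrdered γ] (f : α → γ) :
    LowerSemicontinuous fun x => liminf f (𝓝 x) := by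
  intro x y hy
  obtain ⟨y', hyy', hy'⟩ := exists_between hy
  filter_upwards [eventually_eventually_nhds.2 (eventually_lt_of_lt_liminf hy')] with x' hx'
  exact hyy'.trans_le (le_liminf_of_le (by isBoundedDefault) (hx'.mono fun _ h => h.le))

section SuperMean

variable {E F : Type*} [NormedAddCommGroup E] [NormedSpace ℂ E] [NormedAddCommGroup F]
  [NormedSpace ℂ F]

def SuperMeanOn (Ω : Set E) (v : E → ℝ≥0∞) : Prop :=
  ∀ z w : E, ∀ r : ℝ, 0 < r → (∀ c : ℂ, ‖c‖ ≤ r → z + c • w ∈ Ω) →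
    ∫⁻ θ in Set.Ioc 0 (2 * Real.pi), v (z + ((r : ℂ) * Complex.exp (θ * Complex.I)) • w)
      ≤ ENNReal.ofReal (2 * Real.pi) * v z

variable {Ω Ω' : Set E} {v : E → ℝ≥0∞}

lemma SuperMeanOn.mono (h : SuperMeanOn Ω v) (hΩ : Ω' ⊆ Ω) : SuperMeanOn Ω' v :=
  fun z w r hr hdisc => h z w r hr fun c hc => hΩ (hdisc c hc)

lemma SuperMeanOn.comp_linearMap {Ω : Set F} {v : F → ℝ≥0∞} (h : SuperMeanOn Ω v)
    (L : E →ₗ[ℂ] F) : SuperMeanOn (L ⁻¹' Ω) (v ∘ L) := by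
  intro z w r hr hdisc
  simpa using h (L z) (L w) r hr fun c hc => by simpa using hdisc c hc

lemma SuperMeanOn.iInf {ι : Sort*} {v : ι → E → ℝ≥0∞} (h : ∀ i, SuperMeanOn Ω (v i)) :
    SuperMeanOn Ω fun x => ⨅ i, v i x := by
  intro z w r hr hdisc
  rw [ENNReal.mul_iInf_of_ne (by simp [Real.pi_pos]) ENNReal.ofReal_ne_top]
  exact le_iInf fun i => (lintegral_mono fun _ => iInf_le _ i).trans (h i z w r hr hdisc)

lemma eventually_forall_add_smul_mem (hΩ : IsOpen Ω) {z w : E} {r : ℝ}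
    (hdisc : ∀ c : ℂ, ‖c‖ ≤ r → z + c • w ∈ Ω) :
    ∀ᶠ p in 𝓝 z, ∀ c : ℂ, ‖c‖ ≤ r → p + c • w ∈ Ω := by
  have := (isCompact_closedBall (0 : ℂ) r).eventually_forall_of_forall_eventually
    (P := fun p c => p + c • w ∈ Ω) fun c hc => by
      refine ((continuous_fst.add (continuous_snd.smul continuous_const)).continuousAt
        (x := (z, c))).preimage_mem_nhds (hΩ.mem_nhds ?_)
      exact hdisc c (by simpa using hc)
  filter_upwards [this] with p hp c hc using hp c (by simpa using hc)

lemma SuperMeanOn.liminf_nhds (hΩ : IsOpen Ω) (h : SuperMeanOn Ω v) :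
    SuperMeanOn Ω fun x => liminf v (𝓝 x) := by
  intro z w r hr hdisc
  set V : E → ℝ≥0∞ := fun x => liminf v (𝓝 x)
  set γ : ℝ → E := fun θ => ((r : ℂ) * Complex.exp (θ * Complex.I)) • w
  have hV : LowerSemicontinuous V := lowerSemicontinuous_liminf_nhds v
  have hVv : ∀ x, V x ≤ v x := fun x =>
    liminf_le_of_frequently_le' (frequently_iff.2 fun hU => ⟨x, mem_of_mem_nhds hU, le_rfl⟩)
  have hγ : Continuous γ := by fun_prop
  have hmeas : ∀ p, Measurable fun θ => V (p + γ θ) := by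
    intro p
    have hlsc : LowerSemicontinuous fun θ => V (p + γ θ) := fun θ y hy =>
      ((continuous_const.add hγ).tendsto θ).eventually (hV _ y hy)
    exact hlsc.measurable
  calc ∫⁻ θ in Set.Ioc 0 (2 * Real.pi), V (z + γ θ)
      ≤ ∫⁻ θ in Set.Ioc 0 (2 * Real.pi), liminf (fun p => V (p + γ θ)) (𝓝 z) :=
        lintegral_mono fun θ => (hV.le_liminf _).trans
          ((continuous_id.add continuous_const).tendsto' z (z + γ θ) rfl).liminf_le_liminf_comp
    _ ≤ liminf (fun p => ∫⁻ θ in Set.Ioc 0 (2 * Real.pi), V (p + γ θ)) (𝓝 z) :=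
        lintegral_liminf_le hmeas
    _ ≤ liminf (fun p => ENNReal.ofReal (2 * Real.pi) * v p) (𝓝 z) := by
        refine liminf_le_liminf ?_
        filter_upwards [eventually_forall_add_smul_mem hΩ hdisc] with p hp
        exact (lintegral_mono fun θ => hVv _).trans (h p w r hr hp)
    _ = ENNReal.ofReal (2 * Real.pi) * V z :=
        ((monotone_id.const_mul' _).map_liminf_of_continuousAt v
          (ENNReal.continuous_const_mul ENNReal.ofReal_ne_top).continuousAt).symm

end SuperMean

lemma norm_ofReal_mul_exp_ofReal_mul_I {r : ℝ} (hr : 0 ≤ r) (θ : ℝ) :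
    ‖(r : ℂ) * Complex.exp (θ * Complex.I)‖ = r := by
  rw [norm_mul, Complex.norm_exp_ofReal_mul_I, Complex.norm_real, mul_one, Real.norm_of_nonneg hr]

lemma plurisubharmonicOn_iff_superMeanOn {Ω : Set (Cn n)} {f : Cn n → EReal}
    (hf : ∀ z ∈ Ω, f z ≤ 0) :
    PlurisubharmonicOn Ω f ↔ UpperSemicontinuousOn f Ω ∧ SuperMeanOn Ω fun z => (f z).negPart := by
  have center_mem : ∀ {z w : Cn n} {r : ℝ}, 0 < r → (∀ c : ℂ, ‖c‖ ≤ r → z + c • w ∈ Ω) → z ∈ Ω :=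
    fun hr hdisc => by simpa using hdisc 0 (by simpa using hr.le)
  have hmean : ∀ z w : Cn n, ∀ r : ℝ, 0 < r → (∀ c : ℂ, ‖c‖ ≤ r → z + c • w ∈ Ω) →
      (((2 * Real.pi : ℝ) : EReal) * f z ≤
        erealIntegral (volume.restrict (Set.Ioc (0 : ℝ) (2 * Real.pi)))
          (fun θ => f (z + ((r : ℂ) * Complex.exp (θ * Complex.I)) • w)) ↔
      ∫⁻ θ in Set.Ioc 0 (2 * Real.pi),
          (f (z + ((r : ℂ) * Complex.exp (θ * Complex.I)) • w)).negPart
        ≤ ENNReal.ofReal (2 * Real.pi) * (f z).negPart) := by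
    intro z w r hr hdisc
    have hcircle : ∀ θ : ℝ, f (z + ((r : ℂ) * Complex.exp (θ * Complex.I)) • w) ≤ 0 :=
      fun θ => hf _ (hdisc _ (norm_ofReal_mul_exp_ofReal_mul_I hr.le θ).le)
    rw [erealIntegral_of_nonpos (ae_of_all _ hcircle),
      EReal.mul_le_neg_coe_iff Real.two_pi_pos.le (hf z (center_mem hr hdisc))]
  constructor
  · rintro ⟨husc, -, hsub⟩
    exact ⟨husc, fun z w r hr hdisc =>
      (hmean z w r hr hdisc).1 (hsub z (center_mem hr hdisc) w r hr hdisc)⟩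
  · rintro ⟨husc, hsub⟩
    exact ⟨husc, fun z hz => ((hf z hz).trans_lt EReal.zero_lt_top).ne,
      fun z _ w r hr hdisc => (hmean z w r hr hdisc).2 (hsub z w r hr hdisc)⟩

lemma le_uscRegularization (f : Cn n → EReal) (z : Cn n) : f z ≤ uscRegularization f z :=
  le_limsup_of_frequently_le' (frequently_iff.2 fun hU => ⟨z, mem_of_mem_nhds hU, le_rfl⟩)

lemma upperSemicontinuous_uscRegularization (f : Cn n → EReal) :
    UpperSemicontinuous (uscRegularization f) :=
  lowerSemicontinuous_liminf_nhds (γ := ERealᵒᵈ) f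

lemma negPart_uscRegularization (f : Cn n → EReal) (z : Cn n) :
    (uscRegularization f z).negPart = liminf (fun x => (f x).negPart) (𝓝 z) :=
  EReal.antitone_negPart.map_limsup_of_continuousAt f EReal.continuous_negPart.continuousAt

section Dilation

variable {u : Cn n → EReal} {a a' ε ε' : ℝ}

def dilationMaps (a ε : ℝ) : Set (Cn n →ₗ[ℂ] Cn n) :=
  {L | ∃ φ : Cn n ≃ₗᵢ[ℂ] Cn n,
    ‖φ.toLinearIsometry.toContinuousLinearMap - ContinuousLinearMap.id ℂ (Cn n)‖ < a ∧
    ∃ r : ℝ, 0 ≤ r ∧ r ≤ ε ∧ L = (1 + r : ℝ) • φ.toLinearMap}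

lemma dilatedSup_eq_iSup (u : Cn n → EReal) (a ε : ℝ) (z : Cn n) :
    dilatedSup u a ε z = ⨆ L : dilationMaps a ε, u (L.1 z) := by
  rw [dilatedSup, ← sSup_range]
  congr 1
  ext y
  constructor
  · rintro ⟨φ, hφ, r, h0, h1, rfl⟩
    exact ⟨⟨_, φ, hφ, r, h0, h1, rfl⟩, rfl⟩
  · rintro ⟨⟨_, φ, hφ, r, h0, h1, rfl⟩, rfl⟩
    exact ⟨φ, hφ, r, h0, h1, rfl⟩

lemma id_mem_dilationMaps (ha : 0 < a) (hε : 0 ≤ ε) : LinearMap.id ∈ dilationMaps (n := n) a ε :=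
  ⟨LinearIsometryEquiv.refl ℂ (Cn n), by
    rwa [show (LinearIsometryEquiv.refl ℂ (Cn n)).toLinearIsometry.toContinuousLinearMap =
      ContinuousLinearMap.id ℂ _ from rfl, sub_self, norm_zero], 0, le_rfl, hε, by ext; simp⟩

lemma dilationMaps_mono (ha : a ≤ a') (hε : ε ≤ ε') :
    dilationMaps (n := n) a ε ⊆ dilationMaps a' ε' := by
  rintro _ ⟨φ, hφ, r, h0, h1, rfl⟩
  exact ⟨φ, hφ.trans_le ha, r, h0, h1.trans hε, rfl⟩

lemma norm_apply_le_of_mem_dilationMaps {L : Cn n →ₗ[ℂ] Cn n} (hL : L ∈ dilationMaps a ε)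
    (x : Cn n) : ‖L x‖ ≤ (1 + ε) * ‖x‖ := by
  obtain ⟨φ, -, r, h0, h1, rfl⟩ := hL
  change ‖(1 + r) • φ x‖ ≤ _
  rw [norm_smul, φ.norm_map, Real.norm_of_nonneg (by linarith)]
  gcongr

lemma norm_apply_sub_le_of_mem_dilationMaps {L : Cn n →ₗ[ℂ] Cn n} (hL : L ∈ dilationMaps a ε)
    (x : Cn n) : ‖L x - x‖ ≤ (ε + a) * ‖x‖ := by
  obtain ⟨φ, hφ, r, h0, h1, rfl⟩ := hL
  have hrot : ‖φ x - x‖ ≤ a * ‖x‖ :=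
    ((φ.toLinearIsometry.toContinuousLinearMap - ContinuousLinearMap.id ℂ (Cn n)).le_opNorm x).trans
      (by gcongr)
  calc ‖((1 + r : ℝ) • φ.toLinearMap) x - x‖ = ‖r • φ x + (φ x - x)‖ := by
        congr 1; change (1 + r) • φ x - x = _; rw [add_smul, one_smul]; abel
    _ ≤ r * ‖x‖ + a * ‖x‖ := by
        grw [norm_add_le, norm_smul, φ.norm_map, Real.norm_of_nonneg h0, hrot]
    _ ≤ (ε + a) * ‖x‖ := by rw [add_mul]; gcongr

lemma mapsTo_ball_of_mem_dilationMaps {L : Cn n →ₗ[ℂ] Cn n}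
    (hL : L ∈ dilationMaps a ε) : Set.MapsTo L (ball 0 (1 - ε)) (ball 0 1) := by
  intro x hx
  rw [mem_ball_zero_iff] at hx ⊢
  have hε0 : 0 ≤ ε := by obtain ⟨_, _, r, h0, h1, _⟩ := hL; linarith
  calc ‖L x‖ ≤ (1 + ε) * ‖x‖ := norm_apply_le_of_mem_dilationMaps hL x
    _ < (1 + ε) * (1 - ε) := by gcongr
    _ ≤ 1 := by nlinarith

lemma dilatedSup_le_dilatedSup (ha : a ≤ a') (hε : ε ≤ ε') (z : Cn n) :
    dilatedSup u a ε z ≤ dilatedSup u a' ε' z := by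
  simp only [dilatedSup_eq_iSup]
  exact iSup_le fun L => le_iSup_of_le ⟨L, dilationMaps_mono ha hε L.2⟩ le_rfl

lemma dilatedSupStar_le_dilatedSupStar (ha : a ≤ a') (hε : ε ≤ ε') (z : Cn n) :
    dilatedSupStar u a ε z ≤ dilatedSupStar u a' ε' z :=
  limsup_le_limsup (Eventually.of_forall (dilatedSup_le_dilatedSup ha hε))

lemma le_dilatedSup (ha : 0 < a) (hε : 0 ≤ ε) (z : Cn n) : u z ≤ dilatedSup u a ε z := by
  rw [dilatedSup_eq_iSup]
  exact le_iSup_of_le ⟨_, id_mem_dilationMaps ha hε⟩ le_rfl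

lemma dilatedSupStar_nonpos (hu : ∀ z ∈ ball (0 : Cn n) 1, u z ≤ 0) {z : Cn n}
    (hz : z ∈ ball (0 : Cn n) (1 - ε)) : dilatedSupStar u a ε z ≤ 0 := by
  refine limsup_le_of_le (by isBoundedDefault) ?_
  filter_upwards [isOpen_ball.mem_nhds hz] with x hx
  rw [dilatedSup_eq_iSup]
  exact iSup_le fun L => hu _ (mapsTo_ball_of_mem_dilationMaps L.2 hx)

lemma superMeanOn_negPart_dilatedSup (hu : SuperMeanOn (ball (0 : Cn n) 1) fun z => (u z).negPart) :
    SuperMeanOn (ball (0 : Cn n) (1 - ε)) fun z => (dilatedSup u a ε z).negPart := by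
  have hinf : ∀ z, (dilatedSup u a ε z).negPart = ⨅ L : dilationMaps a ε, (u (L.1 z)).negPart :=
    fun z => by
      rw [dilatedSup_eq_iSup]
      exact EReal.antitone_negPart.map_iSup_of_continuousAt
        EReal.continuous_negPart.continuousAt EReal.negPart_bot
  simp only [hinf]
  exact SuperMeanOn.iInf fun L =>
    (hu.comp_linearMap L.1).mono (mapsTo_ball_of_mem_dilationMaps L.2)

lemma plurisubharmonicOn_dilatedSupStar (hu : PlurisubharmonicOn (ball (0 : Cn n) 1) u)
    (hneg : ∀ z ∈ ball (0 : Cn n) 1, u z ≤ 0) :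
    PlurisubharmonicOn (ball (0 : Cn n) (1 - ε)) (dilatedSupStar u a ε) := by
  rw [plurisubharmonicOn_iff_superMeanOn fun z hz => dilatedSupStar_nonpos hneg hz]
  refine ⟨(upperSemicontinuous_uscRegularization _).upperSemicontinuousOn _, ?_⟩
  have := (superMeanOn_negPart_dilatedSup (a := a) (ε := ε)
    ((plurisubharmonicOn_iff_superMeanOn hneg).1 hu).2).liminf_nhds isOpen_ball
  simpa only [dilatedSupStar, negPart_uscRegularization] using this

lemma exists_dilatedSupStar_le {z : Cn n} (hu : UpperSemicontinuousAt u z) {t : EReal}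
    (ht : u z < t) : ∃ b > 0, dilatedSupStar u b b z ≤ t := by
  obtain ⟨δ, hδ, hball⟩ := Metric.eventually_nhds_iff_ball.1 (hu t ht)
  set R := ‖z‖ + δ
  have hR : 0 < R := by positivity
  refine ⟨δ / (4 * R), by positivity, limsup_le_of_le (by isBoundedDefault) ?_⟩
  filter_upwards [ball_mem_nhds z (half_pos hδ)] with x hx
  rw [dilatedSup_eq_iSup]
  refine iSup_le fun L => (hball _ ?_).le
  rw [mem_ball, dist_eq_norm] at hx ⊢
  have hxR : ‖x‖ ≤ R := by
    have := norm_le_norm_add_norm_sub' x z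
    linarith
  calc ‖L.1 x - z‖ ≤ ‖L.1 x - x‖ + ‖x - z‖ := norm_sub_le_norm_sub_add_norm_sub _ _ _
    _ ≤ (δ / (4 * R) + δ / (4 * R)) * R + ‖x - z‖ := by
        grw [norm_apply_sub_le_of_mem_dilationMaps L.2, hxR]
    _ < δ := by field_simp; linarith

lemma exists_tendsto_dilatedSupStar {z : Cn n} (hu : UpperSemicontinuousAt u z) :
    ∃ g : ℝ → EReal, (∀ a, Tendsto (fun ε => dilatedSupStar u a ε z) (𝓝[>] 0) (𝓝 (g a))) ∧
      Tendsto g (𝓝[>] 0) (𝓝 (u z)) := by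
  set g : ℝ → EReal := fun a => sInf ((fun ε => dilatedSupStar u a ε z) '' Set.Ioi 0)
  have hg : Monotone g := fun a a' h => le_sInf <| by
    rintro _ ⟨ε, hε, rfl⟩
    exact (sInf_le (Set.mem_image_of_mem _ hε)).trans (dilatedSupStar_le_dilatedSupStar h le_rfl z)
  have hlim : sInf (g '' Set.Ioi 0) = u z := by
    refine le_antisymm (le_of_forall_gt_imp_ge_of_dense fun t ht => ?_) (le_sInf ?_)
    · obtain ⟨b, hb, hbt⟩ := exists_dilatedSupStar_le hu ht
      calc sInf (g '' Set.Ioi 0) ≤ g b := sInf_le (Set.mem_image_of_mem _ hb)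
        _ ≤ dilatedSupStar u b b z := sInf_le (Set.mem_image_of_mem _ hb)
        _ ≤ t := hbt
    · rintro _ ⟨a, ha, rfl⟩
      refine le_sInf ?_
      rintro _ ⟨ε, hε, rfl⟩
      exact (le_dilatedSup ha (le_of_lt hε) z).trans (le_uscRegularization _ z)
  refine ⟨g, fun a => Monotone.tendsto_nhdsGT (fun ε ε' h => ?_) 0, hlim ▸ hg.tendsto_nhdsGT 0⟩
  exact dilatedSupStar_le_dilatedSupStar le_rfl h z

end Dilation

theorem statement_16 {n : ℕ} (u : Cn n → EReal)
    (hpsh : PlurisubharmonicOn (Metric.ball (0 : Cn n) 1) u)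
    (hneg : ∀ z ∈ Metric.ball (0 : Cn n) 1, u z < 0) :
    (∀ a ε : ℝ, 0 < a → a < 1 → 0 < ε → ε < 1 →
        PlurisubharmonicOn (Metric.ball (0 : Cn n) (1 - ε)) (dilatedSupStar u a ε)) ∧
      ∀ z ∈ Metric.ball (0 : Cn n) 1, ∃ g : ℝ → EReal,
        (∀ a : ℝ, 0 < a → a < 1 →
          Filter.Tendsto (fun ε => dilatedSupStar u a ε z)
            (nhdsWithin 0 (Set.Ioi 0)) (nhds (g a))) ∧
        Filter.Tendsto g (nhdsWithin 0 (Set.Ioi 0)) (nhds (u z)) := by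
  refine ⟨fun a ε _ _ _ _ => plurisubharmonicOn_dilatedSupStar hpsh fun z hz => (hneg z hz).le,
    fun z hz => ?_⟩
  have husc : UpperSemicontinuousAt u z := fun t ht => by
    simpa only [nhdsWithin_eq_nhds.2 (isOpen_ball.mem_nhds hz)] using hpsh.1 z hz t ht
  obtain ⟨g, hεlim, halim⟩ := exists_tendsto_dilatedSupStar husc
  exact ⟨g, fun a _ _ => hεlim a, halim⟩
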